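/- Let k ≥ 2 and let F be a k-uniform, (k+1)-regular linear hypergraph on k² vertices arising from an affine plane of order k, in which every two distinct intersecting edges e, e' have the property that every edge of F intersects e or e'. If τ(F) = 2k−1, then for every edge e of F and every nonempty subset X of the vertices of e, the hypergraph F(X) obtained by deleting X and all edges meeting X satisfies τ(F(X)) = 2k−1−|X|. -/

import Mathlib

/-!
Through any vertex `v ∈ X` pass two distinct edges `e, e'` (regularity); they share `v`, so
`e ∪ e'` has at most `2k - 1` vertices, and by the affine-plane property it is a transversal of
`F`. Removing `X` from it gives a transversal of `F(X)`, whence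
`τ(F(X)) ≤ 2k - 1 - |X|`. Conversely a minimum transversal of `F(X)` together with `X` is a
transversal of `F`, so `2k - 1 = τ(F) ≤ τ(F(X)) + |X|`.
-/

structure FinHypergraph (α : Type) where
  verts : Finset α
  edges : Finset (Finset α)
deriving DecidableEq

namespace FinHypergraph

variable {α : Type} [DecidableEq α]

/-- All edges are subsets of the vertex set. -/
def Wellformed (H : FinHypergraph α) : Prop := ∀ e ∈ H.edges, e ⊆ H.verts

/-- Every edge has exactly `k` vertices. -/
def Uniform (H : FinHypergraph α) (k : ℕ) : Prop := ∀ e ∈ H.edges, e.card = k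

/-- Any two distinct edges intersect in at most one vertex. -/
def Linear (H : FinHypergraph α) : Prop :=
  ∀ e ∈ H.edges, ∀ f ∈ H.edges, e ≠ f → (e ∩ f).card ≤ 1

/-- `T` is a transversal: a set of vertices meeting every edge. -/
def IsTransversal (H : FinHypergraph α) (T : Finset α) : Prop :=
  T ⊆ H.verts ∧ ∀ e ∈ H.edges, (T ∩ e).Nonempty

/-- The transversal number: minimum size of a transversal. -/
noncomputable def tau (H : FinHypergraph α) : ℕ :=
  sInf {n : ℕ | ∃ T : Finset α, H.IsTransversal T ∧ T.card = n}

/-- The degree of a vertex: the number of edges containing it. -/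
def degree (H : FinHypergraph α) (v : α) : ℕ := (H.edges.filter (fun e => v ∈ e)).card

/-- Every vertex lies in exactly `r` edges. -/
def Regular (H : FinHypergraph α) (r : ℕ) : Prop := ∀ v ∈ H.verts, H.degree v = r

/-- Delete a set `X` of vertices together with all edges meeting `X`. -/
def delete (H : FinHypergraph α) (X : Finset α) : FinHypergraph α :=
  ⟨H.verts \ X, H.edges.filter (fun e => ∀ x ∈ X, x ∉ e)⟩

end FinHypergraph

namespace FinHypergraph

open Finset

variable {α : Type} [DecidableEq α] {H : FinHypergraph α} {T X e : Finset α}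

theorem tau_le_card (hT : H.IsTransversal T) : H.tau ≤ T.card :=
  Nat.sInf_le ⟨T, hT, rfl⟩

theorem exists_isTransversal_card_eq_tau (hT : H.IsTransversal T) :
    ∃ T', H.IsTransversal T' ∧ T'.card = H.tau := by
  have hne : {n : ℕ | ∃ T : Finset α, H.IsTransversal T ∧ T.card = n}.Nonempty :=
    ⟨T.card, T, hT, rfl⟩
  exact Nat.sInf_mem hne

theorem IsTransversal.sdiff_delete (hT : H.IsTransversal T) (X : Finset α) :
    (H.delete X).IsTransversal (T \ X) := by
  refine ⟨sdiff_subset_sdiff hT.1 subset_rfl, fun f hf => ?_⟩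
  obtain ⟨hfH, hfX⟩ := mem_filter.1 hf
  obtain ⟨w, hw⟩ := hT.2 f hfH
  obtain ⟨hwT, hwf⟩ := mem_inter.1 hw
  exact ⟨w, mem_inter.2 ⟨mem_sdiff.2 ⟨hwT, fun hwX => hfX w hwX hwf⟩, hwf⟩⟩

theorem IsTransversal.union_of_delete (hT : (H.delete X).IsTransversal T) (hX : X ⊆ H.verts) :
    H.IsTransversal (T ∪ X) := by
  refine ⟨union_subset (hT.1.trans sdiff_subset) hX, fun f hf => ?_⟩
  by_cases hfX : ∀ x ∈ X, x ∉ f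
  · exact (hT.2 f (mem_filter.2 ⟨hf, hfX⟩)).mono (inter_subset_inter_right subset_union_left)
  · obtain ⟨x, hxX, hxf⟩ : ∃ x ∈ X, x ∈ f := by simpa using hfX
    exact ⟨x, mem_inter.2 ⟨mem_union_right T hxX, hxf⟩⟩

theorem tau_le_tau_delete_add_card (hT : (H.delete X).IsTransversal T) (hX : X ⊆ H.verts) :
    H.tau ≤ (H.delete X).tau + X.card := by
  obtain ⟨T', hT', hcard⟩ := exists_isTransversal_card_eq_tau hT
  calc H.tau ≤ (T' ∪ X).card := tau_le_card (hT'.union_of_delete hX)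
    _ ≤ T'.card + X.card := card_union_le T' X
    _ = (H.delete X).tau + X.card := by rw [hcard]

theorem exists_ne_edge_mem_of_regular {r : ℕ} {v : α} (hw : H.Wellformed) (hreg : H.Regular r)
    (hr : 2 ≤ r) (he : e ∈ H.edges) (hv : v ∈ e) : ∃ e' ∈ H.edges, e' ≠ e ∧ v ∈ e' := by
  have hdeg : 1 < (H.edges.filter (v ∈ ·)).card := by
    rw [← degree, hreg v (hw e he hv)]
    omega
  obtain ⟨e', he', hne⟩ := exists_mem_ne hdeg e
  exact ⟨e', (mem_filter.1 he').1, hne, (mem_filter.1 he').2⟩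

theorem card_union_le_of_uniform {k : ℕ} {e' : Finset α} (hu : H.Uniform k) (he : e ∈ H.edges)
    (he' : e' ∈ H.edges) (hee' : (e ∩ e').Nonempty) : (e ∪ e').card ≤ 2 * k - 1 := by
  have h := card_union_add_card_inter e e'
  rw [hu e he, hu e' he'] at h
  have := hee'.card_pos
  omega

end FinHypergraph

open FinHypergraph Finset in
theorem stmt7_general {α : Type} [DecidableEq α] (k : ℕ) (hk : 2 ≤ k) (F : FinHypergraph α)
    (hw : F.Wellformed) (hu : F.Uniform k) (hreg : F.Regular (k + 1))
    (haff : ∀ e ∈ F.edges, ∀ e' ∈ F.edges, e ≠ e' → (e ∩ e').Nonempty →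
      ∀ f ∈ F.edges, (f ∩ (e ∪ e')).Nonempty)
    (htau : F.tau = 2 * k - 1) :
    ∀ e ∈ F.edges, ∀ X : Finset α, X ⊆ e → X.Nonempty →
      (F.delete X).tau = 2 * k - 1 - X.card := by
  intro e he X hXe ⟨v, hvX⟩
  obtain ⟨e', he', hne, hve'⟩ :=
    exists_ne_edge_mem_of_regular hw hreg (by omega) he (hXe hvX)
  have hmeet : (e ∩ e').Nonempty := ⟨v, mem_inter.2 ⟨hXe hvX, hve'⟩⟩
  have hT : F.IsTransversal (e ∪ e') :=
    ⟨union_subset (hw e he) (hw e' he'), fun f hf =>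
      inter_comm f (e ∪ e') ▸ haff e he e' he' hne.symm hmeet f hf⟩
  have hTX := hT.sdiff_delete X
  have hupper : (F.delete X).tau ≤ 2 * k - 1 - X.card :=
    calc (F.delete X).tau ≤ ((e ∪ e') \ X).card := tau_le_card hTX
      _ = (e ∪ e').card - X.card := card_sdiff_of_subset (hXe.trans subset_union_left)
      _ ≤ 2 * k - 1 - X.card := Nat.sub_le_sub_right (card_union_le_of_uniform hu he he' hmeet) _
  have hlower := tau_le_tau_delete_add_card hTX (hXe.trans (hw e he))
  omega

/-- For `k ≥ 2`, let `F` be a `k`-uniform, `(k+1)`-regular linear hypergraph on `k²`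
vertices such that for any two distinct intersecting edges `e, e'`, every edge of `F`
meets `e ∪ e'` (the affine-plane property). If `τ(F) = 2k−1`, then for every edge `e`
of `F` and every nonempty `X ⊆ e`, deleting `X` and all edges meeting `X` gives a
hypergraph with transversal number `2k−1−|X|`. -/
theorem stmt7 {α : Type} [DecidableEq α] (k : ℕ) (hk : 2 ≤ k) (F : FinHypergraph α)
    (hw : F.Wellformed) (hu : F.Uniform k) (hreg : F.Regular (k + 1))
    (hn : F.verts.card = k ^ 2) (hl : F.Linear)
    (haff : ∀ e ∈ F.edges, ∀ e' ∈ F.edges, e ≠ e' → (e ∩ e').Nonempty →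
      ∀ f ∈ F.edges, (f ∩ (e ∪ e')).Nonempty)
    (htau : F.tau = 2 * k - 1) :
    ∀ e ∈ F.edges, ∀ X : Finset α, X ⊆ e → X.Nonempty →
      (F.delete X).tau = 2 * k - 1 - X.card :=
  stmt7_general k hk F hw hu hreg haff htau
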